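/- For every γ > 0 and B > 0: (a) π_B is a probability measure, i.e. Σ_{i=1,2} ∫_𝕋 λ_B(k,i)⁻¹/(γ R̄) dk = 1; (b) for all i, j ∈ {1,2}, every k ∈ 𝕋 with sin(πk) ≠ 0 and every k′ ∈ 𝕋, one has γ·λ_B(k,i)·θ_{i,B}(k)²·θ_{j,B}(k′)²·R(k,k′) = λ_B(k′,j)⁻¹/(γ R̄). In particular the jump kernel P_B(k,i,dk′,j) = γ·λ_B(k,i)·θ_{i,B}(k)²·θ_{j,B}(k′)²·R(k,k′) dk′ does not depend on (k,i) and equals π_B(dk′,{j}), so that π_B is a reversible (hence invariant) probability measure for the Markov chain with transition kernel P_B. -/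

import Mathlib

open MeasureTheory Filter Topology

/-- `α̂(k) = 4 sin²(πk)`. -/
noncomputable def alphaHat (k : ℝ) : ℝ := 4 * Real.sin (Real.pi * k) ^ 2

/-- `ω_{i,B}(k) = √(α̂(k) + B²/4) ± B/2` (plus sign for `i = 1`, minus for `i = 2`). -/
noncomputable def omegaF (B : ℝ) (i : ℕ) (k : ℝ) : ℝ :=
  Real.sqrt (alphaHat k + B ^ 2 / 4) + (if i = 1 then B / 2 else -(B / 2))

/-- `θ_{i,B}(k) = √(ω_{i,B}(k)/(ω_{1,B}(k) + ω_{2,B}(k)))`. -/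
noncomputable def thetaF (B : ℝ) (i : ℕ) (k : ℝ) : ℝ :=
  Real.sqrt (omegaF B i k / (omegaF B 1 k + omegaF B 2 k))

/-- `v_B(k) = α̂′(k)/(2√(α̂(k) + B²/4))`. -/
noncomputable def vF (B : ℝ) (k : ℝ) : ℝ :=
  deriv alphaHat k / (2 * Real.sqrt (alphaHat k + B ^ 2 / 4))

/-- The scattering kernel `R(k,k′) = 16 sin²(πk) sin²(πk′)`. -/
noncomputable def Rker (k k' : ℝ) : ℝ :=
  16 * Real.sin (Real.pi * k) ^ 2 * Real.sin (Real.pi * k') ^ 2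

/-- `R(k) = ∫_𝕋 R(k,k′) dk′`, with `𝕋` identified with `[-1/2, 1/2)`. -/
noncomputable def Rone (k : ℝ) : ℝ := ∫ k' in Set.Ico (-(1 / 2) : ℝ) (1 / 2), Rker k k'

/-- `R̄ = ∫_𝕋 R(k) dk`. -/
noncomputable def Rbar : ℝ := ∫ k in Set.Ico (-(1 / 2) : ℝ) (1 / 2), Rone k

/-- `λ_B(k,i) = (γ θ_{i,B}(k)² R(k))⁻¹`. -/
noncomputable def lamF (γ B : ℝ) (i : ℕ) (k : ℝ) : ℝ :=
  (γ * thetaF B i k ^ 2 * Rone k)⁻¹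

/-- `Ψ_B(k,i) = v_B(k)·λ_B(k,i)`. -/
noncomputable def PsiF (γ B : ℝ) (i : ℕ) (k : ℝ) : ℝ := vF B k * lamF γ B i k

/-- `π_B(S)` for a subset `S` of `𝕋 × {1,2}`: the measure with density
`λ_B(k,i)⁻¹/(γ R̄)` with respect to `dk ⊗ counting`. -/
noncomputable def piMeasF (γ B : ℝ) (S : ℝ → ℕ → Prop) : ℝ :=
  ∑ i ∈ ({1, 2} : Finset ℕ),
    ∫ k in {k : ℝ | k ∈ Set.Ico (-(1 / 2) : ℝ) (1 / 2) ∧ S k i},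
      (lamF γ B i k)⁻¹ / (γ * Rbar)

/-! Since `R(k,k′) = 16 sin²(πk) sin²(πk′)` factorizes, `R(k) = 8 sin²(πk)` and `R̄ = 4`, so
`γ λ_B(k,i) θ_{i,B}(k)² = R(k)⁻¹` and the jump kernel collapses to `θ_{j,B}(k′)² R(k′) / R̄`,
which is exactly the density of `π_B`. Its total mass is `1` because
`θ_{1,B}² + θ_{2,B}² = 1` wherever `sin(πk) ≠ 0`, leaving `∫_𝕋 R / R̄ = 1`. -/

open Real Set MeasureTheory

theorem integral_sin_sq_pi_mul_Ico :
    ∫ k in Ico (-(1 / 2) : ℝ) (1 / 2), sin (π * k) ^ 2 = 1 / 2 := by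
  rw [← integral_Icc_eq_integral_Ico, integral_Icc_eq_integral_Ioc,
    ← intervalIntegral.integral_of_le (by norm_num),
    intervalIntegral.integral_comp_mul_left (fun x => sin x ^ 2) pi_ne_zero, integral_sin_sq,
    show π * -(1 / 2) = -(π / 2) by ring, show π * (1 / 2) = π / 2 by ring]
  simp only [cos_neg, cos_pi_div_two, mul_zero, sub_zero, smul_eq_mul]
  field_simp
  ring

theorem Rone_eq (k : ℝ) : Rone k = 8 * sin (π * k) ^ 2 := by
  simp only [Rone, Rker]
  rw [integral_const_mul, integral_sin_sq_pi_mul_Ico]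
  ring

theorem Rbar_eq : Rbar = 4 := by
  rw [Rbar, funext Rone_eq, integral_const_mul, integral_sin_sq_pi_mul_Ico]
  norm_num

section Omega

variable (B : ℝ) (i : ℕ) {k : ℝ}

theorem alphaHat_pos (hk : sin (π * k) ≠ 0) : 0 < alphaHat k := by
  unfold alphaHat
  positivity

theorem abs_half_le_sqrt_alphaHat (k : ℝ) : |B| / 2 ≤ √(alphaHat k + B ^ 2 / 4) := by
  rw [show |B| / 2 = √(B ^ 2 / 4) by rw [sqrt_div' _ (by norm_num), sqrt_sq_eq_abs]; norm_num]
  exact sqrt_le_sqrt (by unfold alphaHat; linarith [sq_nonneg (sin (π * k))])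

theorem abs_half_lt_sqrt_alphaHat (hk : sin (π * k) ≠ 0) :
    |B| / 2 < √(alphaHat k + B ^ 2 / 4) := by
  rw [show |B| / 2 = √(B ^ 2 / 4) by rw [sqrt_div' _ (by norm_num), sqrt_sq_eq_abs]; norm_num]
  exact sqrt_lt_sqrt (by positivity) (by linarith [alphaHat_pos hk])

theorem omegaF_nonneg (k : ℝ) : 0 ≤ omegaF B i k := by
  have := abs_half_le_sqrt_alphaHat B k
  unfold omegaF
  split_ifs <;> cases abs_cases B <;> linarith

theorem omegaF_pos (hk : sin (π * k) ≠ 0) : 0 < omegaF B i k := by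
  have := abs_half_lt_sqrt_alphaHat B hk
  unfold omegaF
  split_ifs <;> cases abs_cases B <;> linarith

theorem thetaF_sq (k : ℝ) : thetaF B i k ^ 2 = omegaF B i k / (omegaF B 1 k + omegaF B 2 k) :=
  sq_sqrt <| div_nonneg (omegaF_nonneg B i k) <|
    add_nonneg (omegaF_nonneg B 1 k) (omegaF_nonneg B 2 k)

theorem thetaF_sq_pos (hk : sin (π * k) ≠ 0) : 0 < thetaF B i k ^ 2 := by
  rw [thetaF_sq]
  exact div_pos (omegaF_pos B i hk) (add_pos (omegaF_pos B 1 hk) (omegaF_pos B 2 hk))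

theorem thetaF_one_sq_add_thetaF_two_sq (hk : sin (π * k) ≠ 0) :
    thetaF B 1 k ^ 2 + thetaF B 2 k ^ 2 = 1 := by
  rw [thetaF_sq, thetaF_sq, ← add_div,
    div_self (add_pos (omegaF_pos B 1 hk) (omegaF_pos B 2 hk)).ne']

theorem thetaF_sq_le_one (k : ℝ) : thetaF B i k ^ 2 ≤ 1 := by
  rw [thetaF_sq]
  refine div_le_one_of_le₀ ?_ (add_nonneg (omegaF_nonneg B 1 k) (omegaF_nonneg B 2 k))
  rcases eq_or_ne i 1 with rfl | hi
  · linarith [omegaF_nonneg B 2 k]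
  · have : omegaF B i k = omegaF B 2 k := by simp [omegaF, hi]
    linarith [omegaF_nonneg B 1 k]

theorem measurable_thetaF : Measurable (thetaF B i) := by
  unfold thetaF omegaF alphaHat
  fun_prop

end Omega

section Kernel

variable {γ : ℝ} (hγ : γ ≠ 0) (B : ℝ)
include hγ

theorem inv_lamF_div_eq (i : ℕ) (k : ℝ) :
    (lamF γ B i k)⁻¹ / (γ * Rbar) = 2 * thetaF B i k ^ 2 * sin (π * k) ^ 2 := by
  rw [lamF, inv_inv, Rbar_eq, Rone_eq]
  field_simp
  ring

theorem sum_integral_inv_lamF_div_eq_one :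
    ∑ i ∈ ({1, 2} : Finset ℕ),
      ∫ k in Ico (-(1 / 2) : ℝ) (1 / 2), (lamF γ B i k)⁻¹ / (γ * Rbar) = 1 := by
  have hint (i : ℕ) :
      IntegrableOn (fun k => (lamF γ B i k)⁻¹ / (γ * Rbar)) (Ico (-(1 / 2)) (1 / 2)) := by
    refine Integrable.of_bound (C := 2) ?_ (ae_of_all _ fun k => ?_)
    · simp only [inv_lamF_div_eq hγ]
      exact ((measurable_const.mul ((measurable_thetaF B i).pow_const 2)).mul
        (by fun_prop)).aestronglyMeasurable
    · rw [inv_lamF_div_eq hγ, Real.norm_of_nonneg (by positivity)]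
      nlinarith [thetaF_sq_le_one B i k, sq_nonneg (thetaF B i k), sin_sq_le_one (π * k)]
  have hsum (k : ℝ) : (lamF γ B 1 k)⁻¹ / (γ * Rbar) + (lamF γ B 2 k)⁻¹ / (γ * Rbar)
      = 2 * sin (π * k) ^ 2 := by
    rw [inv_lamF_div_eq hγ, inv_lamF_div_eq hγ]
    by_cases hk : sin (π * k) = 0
    · simp [hk]
    · linear_combination 2 * sin (π * k) ^ 2 * thetaF_one_sq_add_thetaF_two_sq B hk
  rw [Finset.sum_pair (by norm_num), ← integral_add (hint 1) (hint 2), funext hsum,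
    integral_const_mul, integral_sin_sq_pi_mul_Ico]
  norm_num

theorem jumpKernel_eq {k : ℝ} (hk : sin (π * k) ≠ 0) (i j : ℕ) (k' : ℝ) :
    γ * lamF γ B i k * thetaF B i k ^ 2 * thetaF B j k' ^ 2 * Rker k k' =
      (lamF γ B j k')⁻¹ / (γ * Rbar) := by
  have hθ : thetaF B i k ≠ 0 := (pow_ne_zero_iff two_ne_zero).mp (thetaF_sq_pos B i hk).ne'
  rw [lamF, lamF, inv_inv, Rbar_eq, Rone_eq, Rone_eq, Rker]
  field_simp
  ring

end Kernel

theorem stmt_15_general (γ B : ℝ) (hγ : 0 < γ) :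
    (∑ i ∈ ({1, 2} : Finset ℕ),
        ∫ k in Set.Ico (-(1 / 2) : ℝ) (1 / 2), (lamF γ B i k)⁻¹ / (γ * Rbar)) = 1 ∧
    ∀ i j : ℕ, (i = 1 ∨ i = 2) → (j = 1 ∨ j = 2) →
      ∀ k ∈ Set.Ico (-(1 / 2) : ℝ) (1 / 2), Real.sin (Real.pi * k) ≠ 0 →
        ∀ k' ∈ Set.Ico (-(1 / 2) : ℝ) (1 / 2),
          γ * lamF γ B i k * thetaF B i k ^ 2 * thetaF B j k' ^ 2 * Rker k k' =
            (lamF γ B j k')⁻¹ / (γ * Rbar) :=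
  ⟨sum_integral_inv_lamF_div_eq_one hγ.ne' B,
    fun i j _ _ _ _ hk k' _ => jumpKernel_eq hγ.ne' B hk i j k'⟩

/-- For every `γ > 0` and `B > 0`:
(a) `π_B` is a probability measure: `Σ_{i=1,2} ∫_𝕋 λ_B(k,i)⁻¹/(γ R̄) dk = 1`;
(b) for all `i, j ∈ {1,2}`, all `k ∈ 𝕋` with `sin(πk) ≠ 0` and all `k′ ∈ 𝕋`,
`γ·λ_B(k,i)·θ_{i,B}(k)²·θ_{j,B}(k′)²·R(k,k′) = λ_B(k′,j)⁻¹/(γ R̄)`; in particular the jump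
kernel `P_B(k,i,dk′,j)` does not depend on `(k,i)` and equals `π_B(dk′,{j})`, so `π_B` is a
reversible (hence invariant) probability measure for the chain with kernel `P_B`. -/
theorem stmt_15 (γ B : ℝ) (hγ : 0 < γ) (hB : 0 < B) :
    (∑ i ∈ ({1, 2} : Finset ℕ),
        ∫ k in Set.Ico (-(1 / 2) : ℝ) (1 / 2), (lamF γ B i k)⁻¹ / (γ * Rbar)) = 1 ∧
    ∀ i j : ℕ, (i = 1 ∨ i = 2) → (j = 1 ∨ j = 2) →
      ∀ k ∈ Set.Ico (-(1 / 2) : ℝ) (1 / 2), Real.sin (Real.pi * k) ≠ 0 →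
        ∀ k' ∈ Set.Ico (-(1 / 2) : ℝ) (1 / 2),
          γ * lamF γ B i k * thetaF B i k ^ 2 * thetaF B j k' ^ 2 * Rker k k' =
            (lamF γ B j k')⁻¹ / (γ * Rbar) :=
  stmt_15_general γ B hγ
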